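/- arXiv:math/0305154 — 2 statements merged into one kernel-verified Lean document; each statement's English description precedes it below -/
import Mathlib

section
/- Let L be a finite meet-semilattice, G a building set of L, and N ⊆ G. Then N is nested if and only if there exists a chain (totally ordered subset) C ⊆ L such that N = ⋃_{x ∈ C} F(x). -/
attribute [local instance] Classical.propDecidable

universe u

/-- The set of maximal elements of `G` below `x`. -/
def maxBelow {L : Type u} [PartialOrder L] (G : Set L) (x : L) : Set L :=
  {g | g ∈ G ∧ g ≤ x ∧ ∀ h ∈ G, h ≤ x → g ≤ h → h = g}

/-- The tuple in the product of lower intervals which is `g` in the coordinate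
indexed by `g` and bottom elsewhere. -/
noncomputable def deltaTuple {L : Type u} [PartialOrder L] [OrderBot L] (G : Set L) (x : L)
    (g : maxBelow G x) : (h : maxBelow G x) → Set.Iic (h : L) :=
  fun h => if (h : L) = (g : L) then ⟨(h : L), le_refl _⟩ else ⟨⊥, bot_le⟩

/-- `G` is a (combinatorial) building set: `G` avoids the bottom element, and for every
`x ≠ ⊥` the interval `[⊥, x]` decomposes as the product of the intervals below the maximal
elements of `G` below `x`, via an isomorphism sending delta tuples to the corresponding
maximal elements. -/
def IsBuilding {L : Type u} [PartialOrder L] [OrderBot L] (G : Set L) : Prop :=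
  (∀ g ∈ G, g ≠ ⊥) ∧
  ∀ x : L, x ≠ ⊥ →
    ∃ φ : ((h : maxBelow G x) → Set.Iic (h : L)) ≃o Set.Iic x,
      ∀ g : maxBelow G x, ((φ (deltaTuple G x g) : Set.Iic x) : L) = (g : L)

/-- A subset `N` of a building set `G` is nested if for every finite set of at least two
pairwise incomparable elements of `N`, the join exists and does not belong to `G`. -/
def IsNested {L : Type u} [PartialOrder L] (G N : Set L) : Prop :=
  N ⊆ G ∧ ∀ T : Finset L, ↑T ⊆ N → 2 ≤ T.card →
    (∀ a ∈ T, ∀ b ∈ T, a ≠ b → ¬ a ≤ b) →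
    ∃ j : L, IsLUB (↑T : Set L) j ∧ j ∉ G

/-!
Backward direction: if `T` is an antichain of at least two factors of elements of a chain `C`,
let `x₀ ∈ C` be maximal among the elements having a factor `t₀ ∈ T`. Every element of `T` lies
below `x₀`, so `j = ⋁ T` exists in the finite meet-semilattice and `t₀ ≤ j ≤ x₀`; as `t₀` is a
maximal element of `G` below `x₀`, `j ∈ G` would force `j = t₀`, putting all of `T` below `t₀`.

Forward direction: let `S` be the set of maximal elements of the nested set `N` and `j = ⋁ S`.
Through the decomposition `[0̂, j] ≅ ∏ [0̂, h]` each factor `h` of `j` is the join of the elements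
of `S` below it, so nestedness forces `h ∈ S`; hence `F(j) = S`. By induction `N \ S` is the
union of the factors along a chain, all of whose elements `x = ⋁ F(x)` lie below `j`.
-/

open Set

variable {L : Type u}

theorem exists_isLUB_of_bddAbove [SemilatticeInf L] [Finite L] {s : Set L} (hs : BddAbove s) :
    ∃ j, IsLUB s j := by
  obtain ⟨m, hm⟩ := (upperBounds s).toFinite.exists_minimal hs
  -- `m ⊓ u` is again an upper bound, so minimality of `m` gives `m ≤ u`.
  exact ⟨m, hm.1, fun u hu =>
    (hm.2 (fun a ha => le_inf (hm.1 ha) (hu ha)) inf_le_left).trans inf_le_right⟩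

section PartialOrder

variable [PartialOrder L] {G N : Set L} {x : L}

theorem mem_maxBelow_iff {g : L} :
    g ∈ maxBelow G x ↔ Maximal (fun y => y ∈ G ∧ y ≤ x) g :=
  ⟨fun ⟨hg, hgx, hmax⟩ => ⟨⟨hg, hgx⟩, fun y hy hgy => (hmax y hy.1 hy.2 hgy).le⟩,
    fun ⟨⟨hg, hgx⟩, hmax⟩ => ⟨hg, hgx, fun _ hy hyx hgy => (hmax ⟨hy, hyx⟩ hgy).antisymm hgy⟩⟩

theorem exists_le_mem_maxBelow [Finite L] {g : L} (hg : g ∈ G) (hgx : g ≤ x) :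
    ∃ h ∈ maxBelow G x, g ≤ h := by
  obtain ⟨h, hgh, hh⟩ := Finite.exists_le_maximal (p := fun y => y ∈ G ∧ y ≤ x) ⟨hg, hgx⟩
  exact ⟨h, mem_maxBelow_iff.2 hh, hgh⟩

theorem IsNested.mono (hN : IsNested G N) {M : Set L} (hMN : M ⊆ N) : IsNested G M :=
  ⟨hMN.trans hN.1, fun T hT => hN.2 T (hT.trans hMN)⟩

theorem IsNested.exists_isLUB_notMem [Finite L] (hN : IsNested G N) {S : Set L} (hSN : S ⊆ N)
    (hS : IsAntichain (· ≤ ·) S) (hS2 : S.Nontrivial) : ∃ j, IsLUB S j ∧ j ∉ G := by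
  have hT := S.toFinite.coe_toFinset
  obtain ⟨j, hj, hjG⟩ := hN.2 S.toFinite.toFinset (by rwa [hT])
    (Finset.one_lt_card_iff_nontrivial.2 (by rwa [Finset.Nontrivial, hT]))
    (fun a ha b hb => hS (by simpa using ha) (by simpa using hb))
  exact ⟨j, hT ▸ hj, hjG⟩

end PartialOrder

section Building

variable [SemilatticeInf L] [OrderBot L] {G : Set L} {x : L}

theorem deltaTuple_self (g : maxBelow G x) : deltaTuple G x g g = ⊤ := if_pos rfl

theorem deltaTuple_of_ne {g k : maxBelow G x} (hk : k ≠ g) : deltaTuple G x g k = ⊥ :=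
  if_neg (Subtype.val_injective.ne hk)

theorem deltaTuple_le_iff {g : maxBelow G x} {f : (h : maxBelow G x) → Iic (h : L)} :
    deltaTuple G x g ≤ f ↔ ⊤ ≤ f g := by
  refine ⟨fun hf => deltaTuple_self g ▸ hf g, fun hf k => ?_⟩
  by_cases hk : k = g
  · subst hk
    exact (deltaTuple_self k).le.trans hf
  · exact (deltaTuple_of_ne hk).le.trans bot_le

variable (φ : ((h : maxBelow G x) → Iic (h : L)) ≃o Iic x)
  (hφ : ∀ g : maxBelow G x, ((φ (deltaTuple G x g) : Iic x) : L) = (g : L))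
include hφ

theorem symm_apply_factor (g : maxBelow G x) : φ.symm ⟨g, g.2.2.1⟩ = deltaTuple G x g :=
  φ.symm_apply_eq.2 (Subtype.ext (hφ g).symm)

theorem factor_le_iff_top_le_symm_apply {y : Iic x} (g : maxBelow G x) :
    (g : L) ≤ y ↔ ⊤ ≤ φ.symm y g := by
  rw [← deltaTuple_le_iff, ← symm_apply_factor φ hφ, φ.symm.le_iff_le]
  rfl

theorem symm_apply_eq_bot_of_le_factor {y : Iic x} {g k : maxBelow G x} (hyg : (y : L) ≤ g)
    (hk : k ≠ g) : φ.symm y k = ⊥ := by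
  have hle := φ.symm.monotone (show y ≤ ⟨g, g.2.2.1⟩ from hyg) k
  rwa [symm_apply_factor φ hφ, deltaTuple_of_ne hk, le_bot_iff] at hle

end Building

namespace IsBuilding

variable [SemilatticeInf L] [OrderBot L] {G : Set L}

theorem isLUB_maxBelow (hG : IsBuilding G) (x : L) : IsLUB (maxBelow G x) x := by
  refine ⟨fun g hg => hg.2.1, fun z hz => ?_⟩
  rcases eq_or_ne x ⊥ with rfl | hx
  · exact bot_le
  obtain ⟨φ, hφ⟩ := hG.2 x hx
  let y : Iic x := ⟨z ⊓ x, inf_le_right⟩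
  have htop : ⊤ ≤ φ.symm y := fun g =>
    (factor_le_iff_top_le_symm_apply φ hφ g).1 (le_inf (hz g.2) g.2.2.1)
  have hxy : (⊤ : Iic x) ≤ y := φ.map_top ▸ φ.le_symm_apply.1 htop
  exact (show x ≤ z ⊓ x from hxy).trans inf_le_left

theorem isLUB_setOf_le_factor [Finite L] (hG : IsBuilding G) {S : Set L} (hSG : S ⊆ G) {j : L}
    (hj : IsLUB S j) (h : maxBelow G j) : IsLUB {s ∈ S | s ≤ h} h := by
  refine ⟨fun s hs => hs.2, fun z hz => ?_⟩
  obtain ⟨φ, hφ⟩ := hG.2 j (ne_bot_of_le_ne_bot (hG.1 h h.2.1) h.2.2.1)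
  let y : Iic j := ⟨z ⊓ h, inf_le_right.trans h.2.2.1⟩
  -- `U` is the tuple of `y` in the coordinate `h` and top elsewhere; it bounds every `s ∈ S`.
  let U : (k : maxBelow G j) → Iic (k : L) := Function.update ⊤ h (φ.symm y h)
  have hSU : ∀ s (hs : s ∈ S), φ.symm ⟨s, hj.1 hs⟩ ≤ U := by
    intro s hs k
    by_cases hk : k = h
    · subst hk
      dsimp only [U]
      rw [Function.update_self]
      by_cases hsk : s ≤ k
      · exact φ.symm.monotone (show (⟨s, hj.1 hs⟩ : Iic j) ≤ y from le_inf (hz ⟨hs, hsk⟩) hsk) _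
      · obtain ⟨g, hg, hsg⟩ := exists_le_mem_maxBelow (hSG hs) (hj.1 hs)
        have hkg : k ≠ ⟨g, hg⟩ := fun e => hsk (e ▸ hsg)
        rw [symm_apply_eq_bot_of_le_factor φ hφ (g := ⟨g, hg⟩) hsg hkg]
        exact bot_le
    · dsimp only [U]
      rw [Function.update_of_ne hk]
      exact le_top
  have hjU : (⊤ : Iic j) ≤ φ U := hj.2 fun s hs => φ.symm_apply_le.1 (hSU s hs)
  have htop : ⊤ ≤ U := φ.symm.map_top ▸ φ.symm_apply_le.2 hjU
  have hhy := htop h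
  dsimp only [U] at hhy
  rw [Function.update_self] at hhy
  exact ((factor_le_iff_top_le_symm_apply φ hφ h).2 hhy).trans inf_le_left

end IsBuilding

theorem IsNested.maxBelow_eq_of_isLUB [SemilatticeInf L] [OrderBot L] [Finite L] {G N : Set L}
    (hG : IsBuilding G) (hN : IsNested G N) {S : Set L} (hSN : S ⊆ N)
    (hS : IsAntichain (· ≤ ·) S) {j : L} (hj : IsLUB S j) : maxBelow G j = S := by
  have hSG := hSN.trans hN.1
  have hsub : maxBelow G j ⊆ S := by
    intro h hh
    have hlub : IsLUB {s ∈ S | s ≤ h} h := hG.isLUB_setOf_le_factor hSG hj ⟨h, hh⟩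
    rcases Set.subsingleton_or_nontrivial {s ∈ S | s ≤ h} with hsing | hnt
    · rcases hsing.eq_empty_or_singleton with he | ⟨s, hs⟩
      · rw [he, isLUB_empty_iff] at hlub
        exact absurd hlub.eq_bot (hG.1 h hh.1)
      · have hsS : s ∈ {s ∈ S | s ≤ h} := hs ▸ rfl
        rw [hs] at hlub
        exact isLUB_singleton.unique hlub ▸ hsS.1
    · obtain ⟨j', hj', hj'G⟩ :=
        hN.exists_isLUB_notMem (fun s hs => hSN hs.1) (hS.subset fun s hs => hs.1) hnt
      exact absurd (hj'.unique hlub ▸ hh.1) hj'G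
  refine hsub.antisymm fun s hs => ?_
  obtain ⟨g, hg, hsg⟩ := exists_le_mem_maxBelow (hSG hs) (hj.1 hs)
  exact hS.eq hs (hsub hg) hsg ▸ hg

theorem IsNested.exists_isChain_eq_biUnion_maxBelow [SemilatticeInf L] [OrderBot L] [Finite L]
    {G N : Set L} (hG : IsBuilding G) (hN : IsNested G N) :
    ∃ C : Set L, IsChain (· ≤ ·) C ∧ N = ⋃ x ∈ C, maxBelow G x := by
  induction N using WellFoundedLT.induction with
  | _ N ih =>
  rcases N.eq_empty_or_nonempty with rfl | ⟨n, hn⟩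
  · exact ⟨∅, IsChain.empty, by simp⟩
  set S := {s | Maximal (· ∈ N) s}
  have hSN : S ⊆ N := fun s hs => hs.1
  have hS : IsAntichain (· ≤ ·) S := setOfPred_maximal_antichain _
  have hle_S : ∀ n ∈ N, ∃ s ∈ S, n ≤ s := fun n hn =>
    let ⟨s, hns, hs⟩ := Finite.exists_le_maximal hn
    ⟨s, hs, hns⟩
  obtain ⟨s₀, hs₀, -⟩ := hle_S n hn
  obtain ⟨j, hj⟩ : ∃ j, IsLUB S j := by
    rcases S.subsingleton_or_nontrivial with hsing | hnt
    · exact ⟨s₀, hsing.eq_singleton_of_mem hs₀ ▸ isLUB_singleton⟩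
    · obtain ⟨j, hj, -⟩ := hN.exists_isLUB_notMem hSN hS hnt
      exact ⟨j, hj⟩
  have hNj : ∀ n ∈ N, n ≤ j := fun n hn =>
    let ⟨s, hs, hns⟩ := hle_S n hn
    hns.trans (hj.1 hs)
  obtain ⟨C, hC, hNC⟩ := ih (N \ S) (sdiff_ssubset_left_iff.2 ⟨s₀, hSN hs₀, hs₀⟩)
    (hN.mono sdiff_subset)
  refine ⟨insert j C, hC.insert fun x hx _ => Or.inr ?_, ?_⟩
  · exact (hG.isLUB_maxBelow x).2 fun g hg =>
      hNj g (hNC ▸ mem_biUnion hx hg : g ∈ N \ S).1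
  · rw [biUnion_insert, hN.maxBelow_eq_of_isLUB hG hSN hS hj, ← hNC, union_sdiff_cancel hSN]

theorem IsChain.isNested_biUnion_maxBelow [SemilatticeInf L] [Finite L] {G C : Set L}
    (hC : IsChain (· ≤ ·) C) : IsNested G (⋃ x ∈ C, maxBelow G x) := by
  refine ⟨iUnion₂_subset fun x _ g hg => hg.1, fun T hT hT2 hTanti => ?_⟩
  obtain ⟨t₁, ht₁⟩ : T.Nonempty := Finset.card_pos.1 (by omega)
  obtain ⟨x₀, ⟨hx₀C, t₀, ht₀T, ht₀x₀⟩, hx₀max⟩ :=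
    {x ∈ C | ∃ t ∈ T, t ∈ maxBelow G x}.toFinite.exists_maximal <| by
      obtain ⟨x, hx, ht⟩ := mem_iUnion₂.1 (hT ht₁)
      exact ⟨x, hx, t₁, ht₁, ht⟩
  have hTx₀ : ∀ t ∈ T, t ≤ x₀ := by
    intro t ht
    obtain ⟨x, hxC, htx⟩ := mem_iUnion₂.1 (hT ht)
    refine htx.2.1.trans ?_
    rcases eq_or_ne x x₀ with rfl | hne
    · rfl
    · exact (hC hxC hx₀C hne).elim id (hx₀max ⟨hxC, t, ht, htx⟩)
  obtain ⟨j, hj⟩ := exists_isLUB_of_bddAbove ⟨x₀, fun t ht => hTx₀ t ht⟩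
  refine ⟨j, hj, fun hjG => ?_⟩
  have hjt₀ : j = t₀ := ht₀x₀.2.2 j hjG (hj.2 hTx₀) (hj.1 ht₀T)
  obtain ⟨t, ht, hne⟩ := (Finset.one_lt_card_iff_nontrivial.1 hT2).exists_ne t₀
  exact hTanti t ht t₀ ht₀T hne (hjt₀ ▸ hj.1 ht)

theorem isNested_iff_union_of_factors_of_chain_general {L : Type u} [SemilatticeInf L] [Fintype L]
    [OrderBot L] (G : Set L) (hG : IsBuilding G) (N : Set L) :
    IsNested G N ↔
      ∃ C : Set L, IsChain (· ≤ ·) C ∧ N = ⋃ x ∈ C, maxBelow G x := by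
  refine ⟨fun hN => hN.exists_isChain_eq_biUnion_maxBelow hG, ?_⟩
  rintro ⟨C, hC, rfl⟩
  exact hC.isNested_biUnion_maxBelow

/-- `N ⊆ G` is nested iff it is the union of the sets of factors of the
elements of some chain in `L`. -/
theorem isNested_iff_union_of_factors_of_chain {L : Type u} [SemilatticeInf L] [Fintype L]
    [OrderBot L] (G : Set L) (hG : IsBuilding G) (N : Set L) (hN : N ⊆ G) :
    IsNested G N ↔
      ∃ C : Set L, IsChain (· ≤ ·) C ∧ N = ⋃ x ∈ C, maxBelow G x :=
  isNested_iff_union_of_factors_of_chain_general G hG N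
end

section
/- Let L be a finite meet-semilattice and G a building set of L. Suppose x₁,…,x_t and y₁,…,y_k are elements of L such that x_t > y_j for j = 1,…,k, the joins x₁∨…∨x_t and y₁∨…∨y_k exist, F(x₁∨…∨x_t) = {x₁,…,x_t}, and F(y₁∨…∨y_k) = {y₁,…,y_k}. Then the join x₁∨…∨x_{t-1}∨y₁∨…∨y_k exists and F(x₁∨…∨x_{t-1}∨y₁∨…∨y_k) = {x₁,…,x_{t-1}, y₁,…,y_k}. -/
attribute [local instance] Classical.propDecidable

universe u

/-!
Work inside the decomposition `φ : ∏_{h ∈ F(x)} [⊥, h] ≃o [⊥, x]` of `x = x₁ ∨ … ∨ x_t`, with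
`a = x_t` and `y = y₁ ∨ … ∨ y_k ≤ a`. The tuple equal to `φ⁻¹ y` in the coordinate `a` and top
elsewhere is the join of `φ⁻¹ y` and the delta tuples of the other factors, so its image `j` is
the join of `F(x) \ {a}` and `y`, and `j ⊓ a = y` because the coordinate `a` is cut down to
`φ⁻¹ y`. An element of `G` below `j` lies below some factor of `x`: either a factor other than
`a`, or `a` itself, and then it lies below `j ⊓ a = y`, hence below a factor of `y`. Since no
nonzero element lies below two distinct factors of `x`, the factors of `y` are incomparable with
the factors of `x` other than `a`, so `F(x) \ {a} ∪ F(y)` is exactly the set of maximal elements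
of `G` below `j`.
-/

open Set Function

section MaxBelow

variable {L : Type u} [PartialOrder L] {G : Set L} {x : L}

lemma isAntichain_maxBelow : IsAntichain (· ≤ ·) (maxBelow G x) :=
  fun _ ha _ hb hab hle => hab (ha.2.2 _ hb.1 hb.2.1 hle).symm

lemma exists_mem_maxBelow_ge [Finite L] {g : L} (hg : g ∈ G) (hgx : g ≤ x) :
    ∃ a ∈ maxBelow G x, g ≤ a := by
  obtain ⟨a, hga, ha⟩ := Finite.exists_le_maximal (p := fun h => h ∈ G ∧ h ≤ x) ⟨hg, hgx⟩
  exact ⟨a, ⟨ha.1.1, ha.1.2, fun h hG hx hah => (ha.2 ⟨hG, hx⟩ hah).antisymm hah⟩, hga⟩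

lemma maxBelow_eq_of_cofinal {S : Set L} (hSG : S ⊆ G) (hSx : ∀ s ∈ S, s ≤ x)
    (hS : IsAntichain (· ≤ ·) S) (hcofinal : ∀ g ∈ G, g ≤ x → ∃ s ∈ S, g ≤ s) :
    maxBelow G x = S := by
  ext g
  constructor
  · rintro ⟨hgG, hgx, hmax⟩
    obtain ⟨s, hs, hgs⟩ := hcofinal g hgG hgx
    rwa [← hmax s (hSG hs) (hSx s hs) hgs]
  · intro hg
    refine ⟨hSG hg, hSx g hg, fun h hhG hhx hgh => ?_⟩
    obtain ⟨s, hs, hhs⟩ := hcofinal h hhG hhx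
    obtain rfl : g = s := hS.eq hg hs (hgh.trans hhs)
    exact hhs.antisymm hgh

end MaxBelow

lemma le_of_le_update_bot {ι : Type*} {β : ι → Type*} [DecidableEq ι] [∀ i, Preorder (β i)]
    [∀ i, OrderBot (β i)] {U V : ∀ i, β i} {a : ι} {t : β a} (hU : U ≤ update ⊥ a t)
    (ha : U a ≤ V a) : U ≤ V := by
  intro i
  rcases eq_or_ne i a with rfl | hi
  · exact ha
  · exact ((le_update_iff.1 hU).2 i hi).trans bot_le

section Decomposition

variable {L : Type u} [PartialOrder L] [OrderBot L] {G : Set L} {x : L}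

lemma deltaTuple_eq_update (g : maxBelow G x) : deltaTuple G x g = update ⊥ g ⊤ := by
  funext h
  by_cases hg : h = g
  · subst hg
    simp only [deltaTuple, update_self, if_true]
    rfl
  · simp only [deltaTuple, update_of_ne hg, Subtype.coe_ne_coe.2 hg, if_false]
    rfl

lemma OrderIso.symm_le_update_bot_iff (φ : ((h : maxBelow G x) → Iic (h : L)) ≃o Iic x)
    (hφ : ∀ g, ((φ (deltaTuple G x g) : Iic x) : L) = g) {y : L} (hy : y ≤ x)
    (a : maxBelow G x) : φ.symm ⟨y, hy⟩ ≤ update ⊥ a ⊤ ↔ y ≤ a := by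
  rw [← deltaTuple_eq_update, φ.symm_apply_le, ← Subtype.coe_le_coe, hφ]

lemma OrderIso.update_bot_le_iff (φ : ((h : maxBelow G x) → Iic (h : L)) ≃o Iic x)
    (hφ : ∀ g, ((φ (deltaTuple G x g) : Iic x) : L) = g) (U : (h : maxBelow G x) → Iic (h : L))
    (a : maxBelow G x) : update ⊥ a ⊤ ≤ U ↔ (a : L) ≤ φ U := by
  rw [← deltaTuple_eq_update, ← φ.le_iff_le, ← Subtype.coe_le_coe, hφ]

end Decomposition

lemma OrderIso.exists_isLUB_update_eq_inf {L : Type u} [SemilatticeInf L] [OrderBot L]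
    {G : Set L} {x : L}
    (φ : ((h : maxBelow G x) → Iic (h : L)) ≃o Iic x)
    (hφ : ∀ g, ((φ (deltaTuple G x g) : Iic x) : L) = g) (a : maxBelow G x) {y : L}
    (hya : y ≤ a) : ∃ j, IsLUB (maxBelow G x \ {(a : L)} ∪ {y}) j ∧ j ⊓ a = y := by
  have hyx : y ≤ x := hya.trans a.2.2.1
  set D := φ.symm ⟨y, hyx⟩
  set T : (h : maxBelow G x) → Iic (h : L) := update ⊤ a (D a)
  have hub : ∀ z ∈ maxBelow G x \ {(a : L)} ∪ {y}, z ≤ φ T := by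
    rintro z (⟨hz, hza⟩ | rfl)
    · refine (φ.update_bot_le_iff hφ T ⟨z, hz⟩).1 (update_le_iff.2 ⟨?_, fun _ _ => bot_le⟩)
      have hne : (⟨z, hz⟩ : maxBelow G x) ≠ a := fun h => hza (by rw [← h]; rfl)
      simp only [T, update_of_ne hne]
      exact le_rfl
    · have hDT : D ≤ T := le_update_iff.2 ⟨le_rfl, fun _ _ => le_top⟩
      exact (show (⟨z, hyx⟩ : Iic x) ≤ φ T by simpa [D] using φ.monotone hDT)
  refine ⟨φ T, ⟨hub, fun u hu => ?_⟩, le_antisymm ?_ (le_inf (hub y (Or.inr rfl)) hya)⟩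
  · have hTu : (φ T : L) ⊓ u ≤ x := inf_le_left.trans (φ T).2
    have hle : ∀ z ∈ maxBelow G x \ {(a : L)} ∪ {y}, z ≤ (φ T : L) ⊓ u :=
      fun z hz => le_inf (hub z hz) (hu hz)
    have hTU : T ≤ φ.symm ⟨_, hTu⟩ := by
      refine update_le_iff.2 ⟨φ.symm.monotone (hle y (Or.inr rfl)) a, fun b hb => ?_⟩
      have hbU := (φ.update_bot_le_iff hφ (φ.symm ⟨_, hTu⟩) b).2
        (by rw [φ.apply_symm_apply]; exact hle b (Or.inl ⟨b.2, Subtype.coe_ne_coe.2 hb⟩)) b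
      simpa using hbU
    calc (φ T : L) ≤ φ (φ.symm ⟨_, hTu⟩) := φ.monotone hTU
      _ = (φ T : L) ⊓ u := by simp
      _ ≤ u := inf_le_right
  · have hgx : (φ T : L) ⊓ a ≤ x := inf_le_left.trans (φ T).2
    have hVa := (φ.symm_le_update_bot_iff hφ hgx a).2 inf_le_right
    have hVT : φ.symm ⟨_, hgx⟩ ≤ T := φ.symm_apply_le.2 inf_le_left
    have hVD : φ.symm ⟨_, hgx⟩ ≤ D := le_of_le_update_bot hVa (by simpa [T] using hVT a)
    exact (show (⟨_, hgx⟩ : Iic x) ≤ ⟨y, hyx⟩ by simpa [D] using φ.symm.le_iff_le.1 hVD)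

section Building

variable {L : Type u} [PartialOrder L] [OrderBot L] {G : Set L} {x a : L}

lemma IsBuilding.ne_bot_of_mem_maxBelow (hG : IsBuilding G) (ha : a ∈ maxBelow G x) : x ≠ ⊥ :=
  fun hx => hG.1 a ha.1 (le_bot_iff.1 (hx ▸ ha.2.1))

lemma IsBuilding.eq_of_le_of_le (hG : IsBuilding G) {b g : L} (ha : a ∈ maxBelow G x)
    (hb : b ∈ maxBelow G x) (hg : g ∈ G) (hga : g ≤ a) (hgb : g ≤ b) : a = b := by
  obtain ⟨φ, hφ⟩ := hG.2 x (hG.ne_bot_of_mem_maxBelow ha)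
  by_contra hab
  have hgx : g ≤ x := hga.trans ha.2.1
  have hV : φ.symm ⟨g, hgx⟩ ≤ ⊥ := by
    refine le_of_le_update_bot ((φ.symm_le_update_bot_iff hφ hgx ⟨a, ha⟩).2 hga) ?_
    have hne : (⟨a, ha⟩ : maxBelow G x) ≠ ⟨b, hb⟩ := fun h => hab (congrArg Subtype.val h)
    simpa [update_of_ne hne] using (φ.symm_le_update_bot_iff hφ hgx ⟨b, hb⟩).2 hgb ⟨a, ha⟩
  have hg' := congrArg Subtype.val (φ.symm_apply_eq.1 (le_bot_iff.1 hV))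
  exact hG.1 g hg (by simpa using hg')

lemma IsBuilding.isAntichain_maxBelow_diff_union (hG : IsBuilding G) {y : L}
    (ha : a ∈ maxBelow G x) (hya : ∀ c ∈ maxBelow G y, c < a) :
    IsAntichain (· ≤ ·) (maxBelow G x \ {a} ∪ maxBelow G y) := by
  refine isAntichain_union.2 ⟨isAntichain_maxBelow.subset sdiff_subset, isAntichain_maxBelow,
    fun b hb c hc _ => ⟨fun hbc => ?_, fun hcb => ?_⟩⟩
  · exact hb.2 (isAntichain_maxBelow.eq hb.1 ha (hbc.trans (hya c hc).le))
  · exact hb.2 (hG.eq_of_le_of_le hb.1 ha hc.1 hcb (hya c hc).le)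

end Building

theorem IsBuilding.exists_maxBelow_eq_diff_union {L : Type u} [SemilatticeInf L] [OrderBot L]
    [Finite L] {G : Set L} (hG : IsBuilding G) {x y a : L} (ha : a ∈ maxBelow G x)
    (hy : IsLUB (maxBelow G y) y) (hya : ∀ c ∈ maxBelow G y, c < a) :
    ∃ j, IsLUB (maxBelow G x \ {a} ∪ maxBelow G y) j ∧
      maxBelow G j = maxBelow G x \ {a} ∪ maxBelow G y := by
  obtain ⟨φ, hφ⟩ := hG.2 x (hG.ne_bot_of_mem_maxBelow ha)
  obtain ⟨j, hj, hja⟩ :=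
    φ.exists_isLUB_update_eq_inf hφ ⟨a, ha⟩ (hy.2 fun c hc => (hya c hc).le)
  have hj' : IsLUB (maxBelow G x \ {a} ∪ maxBelow G y) j :=
    (isLUB_congr (t := maxBelow G x \ {a} ∪ {y}) (by rw [upperBounds_union, upperBounds_union,
      hy.upperBounds_eq, upperBounds_singleton])).2 hj
  have hjx : j ≤ x := hj'.2 (by rintro s (hs | hs); exacts [hs.1.2.1, (hya s hs).le.trans ha.2.1])
  refine ⟨j, hj', maxBelow_eq_of_cofinal (union_subset (fun b hb => hb.1.1) fun c hc => hc.1)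
    hj'.1 (hG.isAntichain_maxBelow_diff_union ha hya) fun g hg hgj => ?_⟩
  obtain ⟨b, hb, hgb⟩ := exists_mem_maxBelow_ge hg (hgj.trans hjx)
  by_cases hba : b = a
  · obtain ⟨c, hc, hgc⟩ := exists_mem_maxBelow_ge hg (hja ▸ le_inf hgj (hba ▸ hgb))
    exact ⟨c, Or.inr hc, hgc⟩
  · exact ⟨b, Or.inl ⟨hb, hba⟩, hgb⟩

theorem factors_replace_element_by_factors_below_general {L : Type u} [SemilatticeInf L] [Fintype L]
    [OrderBot L] (G : Set L) (hG : IsBuilding G)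
    (X Y : Finset L) (xt : L) (hxt : xt ∈ X)
    (hlt : ∀ y ∈ Y, y < xt)
    (jx : L) (hFx : maxBelow G jx = ↑X)
    (jy : L) (hjy : IsLUB (↑Y : Set L) jy) (hFy : maxBelow G jy = ↑Y) :
    ∃ j : L, IsLUB ((↑(X.erase xt) : Set L) ∪ ↑Y) j ∧
      maxBelow G j = (↑(X.erase xt) : Set L) ∪ ↑Y := by
  rw [Finset.coe_erase, ← hFx, ← hFy]
  exact hG.exists_maxBelow_eq_diff_union (hFx ▸ Finset.mem_coe.2 hxt) (hFy ▸ hjy)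
    fun c hc => hlt c (by simpa [hFy] using hc)

/-- the "Fact" in the proof of Proposition 2.8: replacing one element `xt`
of a factor set by the factor set of a join of elements strictly below `xt` again yields
a factor set. -/
theorem factors_replace_element_by_factors_below {L : Type u} [SemilatticeInf L] [Fintype L]
    [OrderBot L] (G : Set L) (hG : IsBuilding G)
    (X Y : Finset L) (xt : L) (hxt : xt ∈ X)
    (hlt : ∀ y ∈ Y, y < xt)
    (jx : L) (hjx : IsLUB (↑X : Set L) jx) (hFx : maxBelow G jx = ↑X)
    (jy : L) (hjy : IsLUB (↑Y : Set L) jy) (hFy : maxBelow G jy = ↑Y) :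
    ∃ j : L, IsLUB ((↑(X.erase xt) : Set L) ∪ ↑Y) j ∧
      maxBelow G j = (↑(X.erase xt) : Set L) ∪ ↑Y :=
  factors_replace_element_by_factors_below_general G hG X Y xt hxt hlt jx hFx jy hjy hFy
end
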